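/- Suppose every coupling J_B (B ∈ 𝔅) is independently Gaussian with mean J_{0,B} ∈ ℝ and variance Λ_B² > 0. Fix A ∈ 𝔅. Then the quenched average of the square of the correlation function has the finite lower bound E[ tanh²(β J) ]_{{0, Λ_A²}} ≤ E[ ⟨σ_A⟩_J² ]_{{J_{0,B}, Λ_B²}}, where the left-hand side is the expectation of tanh²(β x) under a centered Gaussian with variance Λ_A² and is independent of all means J_{0,B} and of all other interactions. -/

import Mathlib

open MeasureTheory Real Finset ProbabilityTheory

/-- The spin value of a Boolean: `true ↦ 1`, `false ↦ -1`. -/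
noncomputable def spinVal (b : Bool) : ℝ := if b then 1 else -1

/-- `σ_B = ∏ i ∈ B, σ_i`. -/
noncomputable def sigmaSet {V : Type} (σ : V → Bool) (B : Finset V) : ℝ :=
  ∏ i ∈ B, spinVal (σ i)

/-- The Gibbs (thermal) average `⟨σ_A⟩_J` at inverse temperature `β` for the Hamiltonian
`H(σ) = -∑_{B ∈ ℬ} J_B σ_B`. -/
noncomputable def gibbsAvg {V : Type} [Fintype V] [DecidableEq V] (β : ℝ)
    (ℬ : Finset (Finset V)) (J : ℬ → ℝ) (A : Finset V) : ℝ :=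
  (∑ σ : V → Bool, sigmaSet σ A * Real.exp (β * ∑ B : ℬ, J B * sigmaSet σ (B : Finset V))) /
  (∑ σ : V → Bool, Real.exp (β * ∑ B : ℬ, J B * sigmaSet σ (B : Finset V)))

/-- The product measure of independent Gaussian couplings `J_B ~ N(J_{0,B}, Λ_B²)`. -/
noncomputable def gaussQuenched {V : Type} (ℬ : Finset (Finset V))
    (J0 : Finset V → ℝ) (Λ : Finset V → NNReal) : Measure (ℬ → ℝ) :=
  Measure.pi fun B => gaussianReal (J0 (B : Finset V)) (Λ (B : Finset V) ^ 2)

open scoped NNReal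

/-!
Fix every coupling except `J_A = t`. Since `σ_A = ±1`, the Boltzmann weight depends on `t` through
`cosh (β t) + σ_A sinh (β t)`, so the Gibbs average is `tanh (β t + h)` with cavity field
`h = artanh ⟨σ_A⟩₀`, where `⟨σ_A⟩₀` is the Gibbs average at `J_A = 0` (if `|⟨σ_A⟩₀| = 1`, it is
identically `±1`).
It therefore suffices that moving the mean of a Gaussian away from `0` can only increase the
average of `tanh²`, and then to integrate over `J_A` first.

That holds for every bounded `G` nondecreasing in `|x|`. For `G` even, symmetrising the density
ratio of `N(m, v)` and `N(-m, v)` against `N(0, v)` gives `E G(X + m) = E[w(X) G(X)]` with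
`w x = exp (-m² / 2v) cosh (m x / v)`. The weight `w` has mean `1` and is also nondecreasing in
`|x|`, so `(w x - 1) (G x - G x₀) ≥ 0` where `w x₀ = 1`; integrating gives `E[w G] ≥ E G`.
-/

namespace MeasureTheory

variable {ι : Type*} [Fintype ι] [DecidableEq ι] {X : ι → Type*} [∀ i, MeasurableSpace (X i)]
  {μ : ∀ i, Measure (X i)} [∀ i, IsProbabilityMeasure (μ i)]

theorem measurePreserving_update_prod_pi (i : ι) :
    MeasurePreserving (fun p : (∀ j, X j) × X i => Function.update p.1 i p.2)
      ((Measure.pi μ).prod (μ i)) (Measure.pi μ) := by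
  refine ⟨by fun_prop, (Measure.pi_eq fun s hs => ?_).symm⟩
  have hpre : (fun p : (∀ j, X j) × X i => Function.update p.1 i p.2) ⁻¹' Set.univ.pi s
      = Set.univ.pi (Function.update s i Set.univ) ×ˢ s i := by
    ext ⟨x, t⟩
    simp only [Set.mem_preimage, Set.mem_univ_pi, Set.mem_prod]
    grind
  rw [Measure.map_apply (by fun_prop) (.univ_pi hs), hpre, Measure.prod_prod, Measure.pi_pi,
    Fintype.prod_eq_mul_prod_compl i, Fintype.prod_eq_mul_prod_compl i (fun j => μ j (s j)),
    Finset.prod_congr rfl fun j hj => by rw [Function.update_of_ne (by simpa using hj)]]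
  simp only [Function.update_self, measure_univ, one_mul]
  ring

theorem le_integral_pi_of_le_integral_update (i : ι) {F : (∀ j, X j) → ℝ}
    (hF : Integrable F (Measure.pi μ)) {c : ℝ}
    (h : ∀ x, c ≤ ∫ t, F (Function.update x i t) ∂μ i) :
    c ≤ ∫ x, F x ∂Measure.pi μ := by
  have hmp := measurePreserving_update_prod_pi (μ := μ) i
  have hFu : Integrable (fun p : (∀ j, X j) × X i => F (Function.update p.1 i p.2))
      ((Measure.pi μ).prod (μ i)) :=
    (hmp.integrable_comp hF.aestronglyMeasurable).2 hF
  have hmap : ∫ x, F x ∂Measure.pi μ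
      = ∫ p, F (Function.update p.1 i p.2) ∂(Measure.pi μ).prod (μ i) := by
    rw [← integral_map hmp.measurable.aemeasurable (by rw [hmp.map_eq]; exact hF.1), hmp.map_eq]
  rw [hmap, integral_prod _ hFu]
  calc c = ∫ _, c ∂Measure.pi μ := by simp
    _ ≤ _ := integral_mono (integrable_const c) hFu.integral_prod_left h

end MeasureTheory

lemma gaussianPDFReal_eq_mul_exp (m : ℝ) {v : ℝ≥0} (hv : v ≠ 0) (x : ℝ) :
    gaussianPDFReal m v x
      = exp (-(m ^ 2 / (2 * v))) * exp (m / v * x) * gaussianPDFReal 0 v x := by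
  have hv' : (v : ℝ) ≠ 0 := by exact_mod_cast hv
  rw [gaussianPDFReal, gaussianPDFReal, ← exp_add, mul_left_comm, ← exp_add]
  congr 2
  field_simp
  ring

lemma integral_gaussianReal_eq_integral_exp_mul (m : ℝ) {v : ℝ≥0} (hv : v ≠ 0) (G : ℝ → ℝ) :
    ∫ x, G x ∂gaussianReal m v
      = ∫ x, exp (-(m ^ 2 / (2 * v))) * exp (m / v * x) * G x ∂gaussianReal 0 v := by
  simp only [integral_gaussianReal_eq_integral_smul hv, smul_eq_mul,
    gaussianPDFReal_eq_mul_exp m hv]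
  congr 1 with x
  ring

lemma integral_gaussianReal_neg {G : ℝ → ℝ} (hG : ∀ x, G (-x) = G x) (m : ℝ) (v : ℝ≥0) :
    ∫ x, G x ∂gaussianReal (-m) v = ∫ x, G x ∂gaussianReal m v := by
  rw [← gaussianReal_map_neg]
  exact (integral_map_equiv (MeasurableEquiv.neg ℝ) G).trans (by simp [hG])

lemma integrable_cosh_mul_gaussianReal (a m : ℝ) (v : ℝ≥0) :
    Integrable (fun x => cosh (a * x)) (gaussianReal m v) := by
  simp only [cosh_eq, ← neg_mul]
  exact ((integrable_exp_mul_gaussianReal a).add (integrable_exp_mul_gaussianReal (-a))).div_const 2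

lemma integral_gaussianReal_eq_integral_cosh_mul {G : ℝ → ℝ} {C : ℝ} (hGm : Measurable G)
    (hGb : ∀ x, |G x| ≤ C) (hG : ∀ x, G (-x) = G x) (m : ℝ) {v : ℝ≥0} (hv : v ≠ 0) :
    ∫ x, G x ∂gaussianReal m v
      = ∫ x, exp (-(m ^ 2 / (2 * v))) * cosh (m / v * x) * G x ∂gaussianReal 0 v := by
  have hint : ∀ a : ℝ,
      Integrable (fun x => exp (-(m ^ 2 / (2 * v))) * exp (a * x) * G x) (gaussianReal 0 v) :=
    fun a => ((integrable_exp_mul_gaussianReal a).const_mul _).mul_bdd hGm.aestronglyMeasurable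
      (ae_of_all _ hGb)
  calc ∫ x, G x ∂gaussianReal m v
      = (∫ x, G x ∂gaussianReal m v + ∫ x, G x ∂gaussianReal (-m) v) / 2 := by
        rw [integral_gaussianReal_neg hG]; ring
    _ = _ := by
        rw [integral_gaussianReal_eq_integral_exp_mul m hv,
          integral_gaussianReal_eq_integral_exp_mul (-m) hv, neg_sq,
          ← integral_add (hint _) (hint _), ← integral_div]
        congr 1 with x
        rw [cosh_eq]
        ring_nf

lemma mul_sub_nonneg_of_abs_mono {f g : ℝ → ℝ} (hf : ∀ x y, |x| ≤ |y| → f x ≤ f y)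
    (hg : ∀ x y, |x| ≤ |y| → g x ≤ g y) (x y : ℝ) : 0 ≤ (f x - f y) * (g x - g y) := by
  rcases le_total |x| |y| with h | h
  · exact mul_nonneg_of_nonpos_of_nonpos (sub_nonpos.2 (hf x y h)) (sub_nonpos.2 (hg x y h))
  · exact mul_nonneg (sub_nonneg.2 (hf y x h)) (sub_nonneg.2 (hg y x h))

lemma integral_le_integral_mul_of_abs_mono {μ : Measure ℝ} [IsProbabilityMeasure μ]
    {w G : ℝ → ℝ} (hw : ∀ x y, |x| ≤ |y| → w x ≤ w y) (hG : ∀ x y, |x| ≤ |y| → G x ≤ G y)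
    {x₀ : ℝ} (hwx₀ : w x₀ = 1) (hwi : Integrable w μ) (hw1 : ∫ x, w x ∂μ = 1)
    (hGi : Integrable G μ) (hwGi : Integrable (fun x => w x * G x) μ) :
    ∫ x, G x ∂μ ≤ ∫ x, w x * G x ∂μ := by
  have hprod_nonneg : ∀ x, 0 ≤ (w x - 1) * (G x - G x₀) := fun x =>
    hwx₀ ▸ mul_sub_nonneg_of_abs_mono hw hG x x₀
  have hexpand : ∫ x, (w x - 1) * (G x - G x₀) ∂μ = ∫ x, w x * G x ∂μ - ∫ x, G x ∂μ := by
    have hsplit : ∀ x, (w x - 1) * (G x - G x₀) = (w x * G x - G x) - G x₀ * (w x - 1) :=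
      fun x => by ring
    have hi₁ : Integrable (fun x => w x * G x - G x) μ := hwGi.sub hGi
    have hi₂ : Integrable (fun x => G x₀ * (w x - 1)) μ :=
      (hwi.sub (integrable_const 1)).const_mul _
    simp only [hsplit]
    rw [integral_sub hi₁ hi₂, integral_sub hwGi hGi, integral_const_mul,
      integral_sub hwi (integrable_const 1), hw1]
    simp
  have hnonneg : 0 ≤ ∫ x, (w x - 1) * (G x - G x₀) ∂μ := integral_nonneg hprod_nonneg
  linarith

theorem integral_gaussianReal_zero_le_of_abs_mono {G : ℝ → ℝ} {C : ℝ} (hGm : Measurable G)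
    (hGb : ∀ x, |G x| ≤ C) (hG : ∀ x y, |x| ≤ |y| → G x ≤ G y) (m : ℝ) (v : ℝ≥0) :
    ∫ x, G x ∂gaussianReal 0 v ≤ ∫ x, G x ∂gaussianReal m v := by
  rcases eq_or_ne v 0 with rfl | hv
  · simpa [gaussianReal_zero_var] using hG 0 m (by simp)
  rcases eq_or_ne m 0 with rfl | hm
  · rfl
  have hv' : (v : ℝ) ≠ 0 := by exact_mod_cast hv
  have heven : ∀ x, G (-x) = G x := fun x =>
    le_antisymm (hG _ _ (abs_neg x).le) (hG _ _ (abs_neg x).ge)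
  set w : ℝ → ℝ := fun x => exp (-(m ^ 2 / (2 * v))) * cosh (m / v * x) with hw
  have hwi : Integrable w (gaussianReal 0 v) :=
    (integrable_cosh_mul_gaussianReal _ _ _).const_mul _
  have hw1 : ∫ x, w x ∂gaussianReal 0 v = 1 := by
    simpa using (integral_gaussianReal_eq_integral_cosh_mul (G := fun _ => 1) measurable_const
      (fun _ => le_refl _) (fun _ => rfl) m hv).symm
  have hw_mono : ∀ x y, |x| ≤ |y| → w x ≤ w y := fun x y hxy => by
    have : |m / v * x| ≤ |m / v * y| := by rw [abs_mul, abs_mul]; gcongr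
    simp only [hw]
    gcongr
    exact cosh_le_cosh.2 this
  have hwx₀ : w (arcosh (exp (m ^ 2 / (2 * v))) / (m / v)) = 1 := by
    have hK : 1 ≤ exp (m ^ 2 / (2 * v)) := one_le_exp (by positivity)
    simp only [hw]
    rw [mul_div_cancel₀ _ (div_ne_zero hm hv'), cosh_arcosh hK, ← exp_add, neg_add_cancel, exp_zero]
  rw [integral_gaussianReal_eq_integral_cosh_mul hGm hGb heven m hv]
  exact integral_le_integral_mul_of_abs_mono hw_mono hG hwx₀ hwi hw1
    (.of_bound hGm.aestronglyMeasurable C (ae_of_all _ hGb))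
    (hwi.mul_bdd hGm.aestronglyMeasurable (ae_of_all _ hGb))

theorem Real.continuous_tanh : Continuous tanh := by
  simp only [funext tanh_eq_sinh_div_cosh]
  exact continuous_sinh.div continuous_cosh fun x => (cosh_pos x).ne'

lemma tanh_sq_le_tanh_sq {x y : ℝ} (h : |x| ≤ |y|) : tanh x ^ 2 ≤ tanh y ^ 2 := by
  have hsq : ∀ z, tanh z ^ 2 = 1 - (cosh z ^ 2)⁻¹ := fun z => by
    rw [tanh_eq_sinh_div_cosh, div_pow, sinh_sq]
    field_simp
  have hc : cosh x ≤ cosh y := cosh_le_cosh.2 h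
  rw [hsq, hsq]
  gcongr

theorem integral_tanh_sq_gaussianReal_le (β a m : ℝ) (v : ℝ≥0) :
    ∫ x, tanh (β * x) ^ 2 ∂gaussianReal 0 v ≤ ∫ x, tanh (β * x + a) ^ 2 ∂gaussianReal m v := by
  have hmeas : Measurable fun y => tanh y ^ 2 := (continuous_tanh.pow 2).measurable
  have hbound : ∀ y, |tanh y ^ 2| ≤ 1 := fun y => by
    rw [abs_of_nonneg (sq_nonneg _)]; exact (tanh_sq_lt_one y).le
  have hmap : ∀ (μ : Measure ℝ) (f : ℝ → ℝ), Measurable f →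
      ∫ x, tanh (f x) ^ 2 ∂μ = ∫ y, tanh y ^ 2 ∂μ.map f := fun μ f hf =>
    (integral_map hf.aemeasurable hmeas.aestronglyMeasurable).symm
  have hcomp : (fun x => β * x + a) = (· + a) ∘ (β * ·) := rfl
  rw [hmap _ (β * ·) (by fun_prop), hmap (gaussianReal m v) _ (by fun_prop), hcomp,
    ← Measure.map_map (by fun_prop) (by fun_prop), gaussianReal_map_const_mul,
    gaussianReal_map_const_mul, gaussianReal_map_add_const, mul_zero]
  exact integral_gaussianReal_zero_le_of_abs_mono hmeas hbound (fun x y => tanh_sq_le_tanh_sq) _ _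

lemma exp_mul_eq_cosh_add_mul_sinh {s : ℝ} (hs : s = 1 ∨ s = -1) (x : ℝ) :
    exp (x * s) = cosh x + s * sinh x := by
  rcases hs with rfl | rfl
  · simp [cosh_add_sinh]
  · simp [← sub_eq_add_neg, cosh_sub_sinh]

lemma cosh_mul_add_sinh_mul_div_eq_tanh_add_artanh {N Z : ℝ} (hN : |N| < Z) (s : ℝ) :
    (cosh s * N + sinh s * Z) / (cosh s * Z + sinh s * N) = tanh (s + artanh (N / Z)) := by
  have hZ : 0 < Z := (abs_nonneg N).trans_lt hN
  have hx : N / Z ∈ Set.Ioo (-1) 1 := by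
    rw [Set.mem_Ioo, lt_div_iff₀ hZ, div_lt_one hZ]; constructor <;> linarith [abs_lt.1 hN]
  have hc : √(1 - (N / Z) ^ 2) * Z ≠ 0 :=
    mul_ne_zero (sqrt_pos.2 (by rw [sub_pos, sq_lt_one_iff_abs_lt_one, abs_lt]; exact hx)).ne'
      hZ.ne'
  rw [tanh_eq_sinh_div_cosh, sinh_add, cosh_add, sinh_artanh hx, cosh_artanh hx]
  generalize √(1 - (N / Z) ^ 2) = c at hc ⊢
  rw [← div_div_div_cancel_right₀ hc]
  congr 1
  · field_simp; ring
  · field_simp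

lemma cosh_mul_add_sinh_mul_div_sq_eq_one {N Z : ℝ} (hZ : 0 < Z) (hN : |N| = Z) (s : ℝ) :
    ((cosh s * N + sinh s * Z) / (cosh s * Z + sinh s * N)) ^ 2 = 1 := by
  rcases (abs_eq hZ.le).1 hN with rfl | rfl
  · rw [div_self (by rw [← add_mul, cosh_add_sinh]; positivity), one_pow]
  · have hden : cosh s * Z + sinh s * -Z ≠ 0 := by
      rw [mul_neg, ← sub_eq_add_neg, ← sub_mul, cosh_sub_sinh]; positivity
    rw [show cosh s * -Z + sinh s * Z = -(cosh s * Z + sinh s * -Z) by ring, neg_div,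
      div_self hden, neg_one_sq]

theorem integral_tanh_sq_gaussianReal_le_integral_cosh_sinh_div_sq (β m : ℝ) (v : ℝ≥0) {N Z : ℝ}
    (hZ : 0 < Z) (hN : |N| ≤ Z) :
    ∫ x, tanh (β * x) ^ 2 ∂gaussianReal 0 v
      ≤ ∫ t, ((cosh (β * t) * N + sinh (β * t) * Z) / (cosh (β * t) * Z + sinh (β * t) * N)) ^ 2
          ∂gaussianReal m v := by
  rcases hN.lt_or_eq with hlt | heq
  · simp_rw [cosh_mul_add_sinh_mul_div_eq_tanh_add_artanh hlt]
    exact integral_tanh_sq_gaussianReal_le β _ m v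
  · simp_rw [cosh_mul_add_sinh_mul_div_sq_eq_one hZ heq]
    have hle := norm_integral_le_of_norm_le_const (μ := gaussianReal 0 v)
      (f := fun x => tanh (β * x) ^ 2) (C := 1)
      (ae_of_all _ fun x => by simpa using (tanh_sq_lt_one (β * x)).le)
    simpa using (le_abs_self _).trans hle

lemma sigmaSet_eq_one_or_neg_one {V : Type} (σ : V → Bool) (B : Finset V) :
    sigmaSet σ B = 1 ∨ sigmaSet σ B = -1 := by
  refine Finset.prod_induction _ (fun x => x = 1 ∨ x = -1) ?_ (Or.inl rfl) fun i _ => ?_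
  · rintro a b (rfl | rfl) (rfl | rfl) <;> norm_num
  · cases σ i <;> simp [spinVal]

section Gibbs

variable {V : Type}

noncomputable def boltzmannWeight (β : ℝ) (ℬ : Finset (Finset V)) (J : ℬ → ℝ) (σ : V → Bool) :
    ℝ :=
  exp (β * ∑ B : ℬ, J B * sigmaSet σ (B : Finset V))

variable [DecidableEq V]

lemma boltzmannWeight_update (β : ℝ) (ℬ : Finset (Finset V)) (J : ℬ → ℝ) (i : ℬ) (t : ℝ)
    (σ : V → Bool) :
    boltzmannWeight β ℬ (Function.update J i t) σ
      = (cosh (β * t) + sigmaSet σ i * sinh (β * t))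
          * boltzmannWeight β ℬ (Function.update J i 0) σ := by
  have hsum : ∀ s, ∑ B : ℬ, Function.update J i s B * sigmaSet σ B
      = s * sigmaSet σ i + ∑ B ∈ {i}ᶜ, J B * sigmaSet σ B := fun s => by
    rw [Fintype.sum_eq_add_sum_compl i, Function.update_self]
    congr 1
    exact sum_congr rfl fun B hB => by rw [Function.update_of_ne (by simpa using hB)]
  rw [boltzmannWeight, boltzmannWeight, hsum, hsum, zero_mul, zero_add, mul_add, exp_add,
    ← mul_assoc, exp_mul_eq_cosh_add_mul_sinh (sigmaSet_eq_one_or_neg_one σ i)]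

variable [Fintype V]

lemma gibbsAvg_eq_sum_div_sum (β : ℝ) (ℬ : Finset (Finset V)) (J : ℬ → ℝ) (A : Finset V) :
    gibbsAvg β ℬ J A
      = (∑ σ, sigmaSet σ A * boltzmannWeight β ℬ J σ) / ∑ σ, boltzmannWeight β ℬ J σ := rfl

lemma abs_sum_sigmaSet_mul_le {w : (V → Bool) → ℝ} (hw : ∀ σ, 0 ≤ w σ) (A : Finset V) :
    |∑ σ, sigmaSet σ A * w σ| ≤ ∑ σ, w σ := by
  refine (abs_sum_le_sum_abs _ _).trans (le_of_eq (sum_congr rfl fun σ _ => ?_))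
  rcases sigmaSet_eq_one_or_neg_one σ A with h | h <;> simp [h, abs_of_nonneg (hw σ)]

lemma sum_boltzmannWeight_pos (β : ℝ) (ℬ : Finset (Finset V)) (J : ℬ → ℝ) :
    0 < ∑ σ, boltzmannWeight β ℬ J σ :=
  sum_pos (fun _ _ => exp_pos _) univ_nonempty

lemma abs_gibbsAvg_le_one (β : ℝ) (ℬ : Finset (Finset V)) (J : ℬ → ℝ) (A : Finset V) :
    |gibbsAvg β ℬ J A| ≤ 1 := by
  rw [gibbsAvg_eq_sum_div_sum, abs_div, abs_of_pos (sum_boltzmannWeight_pos β ℬ J),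
    div_le_one (sum_boltzmannWeight_pos β ℬ J)]
  exact abs_sum_sigmaSet_mul_le (fun _ => (exp_pos _).le) A

lemma measurable_gibbsAvg (β : ℝ) (ℬ : Finset (Finset V)) (A : Finset V) :
    Measurable fun J : ℬ → ℝ => gibbsAvg β ℬ J A := by
  unfold gibbsAvg
  fun_prop

lemma gibbsAvg_update (β : ℝ) (ℬ : Finset (Finset V)) (J : ℬ → ℝ) {A : Finset V} (hA : A ∈ ℬ)
    (t : ℝ) :
    gibbsAvg β ℬ (Function.update J ⟨A, hA⟩ t) A
      = (cosh (β * t) * ∑ σ, sigmaSet σ A * boltzmannWeight β ℬ (Function.update J ⟨A, hA⟩ 0) σ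
          + sinh (β * t) * ∑ σ, boltzmannWeight β ℬ (Function.update J ⟨A, hA⟩ 0) σ)
        / (cosh (β * t) * ∑ σ, boltzmannWeight β ℬ (Function.update J ⟨A, hA⟩ 0) σ
          + sinh (β * t) * ∑ σ, sigmaSet σ A
              * boltzmannWeight β ℬ (Function.update J ⟨A, hA⟩ 0) σ) := by
  simp only [gibbsAvg_eq_sum_div_sum, boltzmannWeight_update β ℬ J ⟨A, hA⟩ t, mul_sum,
    ← sum_add_distrib]
  congr 1 <;> refine sum_congr rfl fun σ _ => ?_
  · rcases sigmaSet_eq_one_or_neg_one σ A with h | h <;> rw [h] <;> ring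
  · ring

end Gibbs

theorem gaussian_correlation_square_lower_bound_general
    {V : Type} [Fintype V] [DecidableEq V]
    (ℬ : Finset (Finset V))
    (β : ℝ)
    (J0 : Finset V → ℝ) (Λ : Finset V → NNReal)
    (A : Finset V) (hA : A ∈ ℬ) :
    ∫ x, Real.tanh (β * x) ^ 2 ∂(gaussianReal 0 (Λ A ^ 2))
      ≤ ∫ J, gibbsAvg β ℬ J A ^ 2 ∂(gaussQuenched ℬ J0 Λ) := by
  unfold gaussQuenched
  have hint : Integrable (fun J => gibbsAvg β ℬ J A ^ 2)
      (Measure.pi fun B : ℬ => gaussianReal (J0 B) (Λ B ^ 2)) :=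
    .of_bound ((measurable_gibbsAvg β ℬ A).pow_const 2).aestronglyMeasurable 1
      (ae_of_all _ fun J => by simpa using abs_gibbsAvg_le_one β ℬ J A)
  refine le_integral_pi_of_le_integral_update ⟨A, hA⟩ hint fun J => ?_
  simp_rw [gibbsAvg_update β ℬ J hA]
  exact integral_tanh_sq_gaussianReal_le_integral_cosh_sinh_div_sq β _ _
    (sum_boltzmannWeight_pos β ℬ _) (abs_sum_sigmaSet_mul_le (fun _ => (exp_pos _).le) A)

/-- **Correlation inequality for the Gaussian spin glass.** For independent Gaussian couplings
`J_B ~ N(J_{0,B}, Λ_B²)`, the quenched average of the square of the correlation function is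
bounded below: `E[tanh²(βJ)]_{N(0, Λ_A²)} ≤ E[⟨σ_A⟩_J²]`. -/
theorem gaussian_correlation_square_lower_bound
    {V : Type} [Fintype V] [DecidableEq V]
    (ℬ : Finset (Finset V)) (hℬ : ∀ B ∈ ℬ, B.Nonempty)
    (β : ℝ) (hβ : 0 < β)
    (J0 : Finset V → ℝ) (Λ : Finset V → NNReal) (hΛ : ∀ B, 0 < Λ B)
    (A : Finset V) (hA : A ∈ ℬ) :
    ∫ x, Real.tanh (β * x) ^ 2 ∂(gaussianReal 0 (Λ A ^ 2))
      ≤ ∫ J, gibbsAvg β ℬ J A ^ 2 ∂(gaussQuenched ℬ J0 Λ) :=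
  gaussian_correlation_square_lower_bound_general ℬ β J0 Λ A hA
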